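/- Let n ≥ 3 and let A = (1, a₂, a₃, …, aₙ) and B = (b₁, 1, b₃, …, bₙ) be points of X. Then the geodesic distance d(A,B) equals the minimum, over all m with 0 ≤ m ≤ n − 2, all sequences (c₁, …, c_m) of distinct indices in {3, …, n}, and all sign choices ε_{c₁}, …, ε_{c_m} ∈ {−1, +1}, of the quantity max( {2 − a₂ + ε_{c₁} b_{c₁}} ∪ {2 + ε_{c_t} a_{c_t} + ε_{c_{t+1}} b_{c_{t+1}} : 1 ≤ t ≤ m − 1} ∪ {2 + ε_{c_m} a_{c_m} − b₁} ∪ {|a_p − b_p| : p ∈ {3, …, n} \ {c₁, …, c_m}} ), where for m = 0 the quantity is max( {2 − a₂ − b₁} ∪ {|a_p − b_p| : 3 ≤ p ≤ n} ). -/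

import Mathlib

open Set
open scoped ENNReal

/-- The geodesic distance between two points on the unit sphere (for the sup norm)
of `Fin n → ℝ`: the infimum over continuous paths `γ : [0,1] → {x : ‖x‖ = 1}` joining
them of the length of `γ`, i.e. its total variation. -/
noncomputable def geoDist {n : ℕ} (A B : Fin n → ℝ) : ℝ≥0∞ :=
  ⨅ (γ : ℝ → (Fin n → ℝ)) (_ : ContinuousOn γ (Icc 0 1)) (_ : γ 0 = A)
    (_ : γ 1 = B) (_ : ∀ t ∈ Icc (0:ℝ) 1, ‖γ t‖ = 1),
    eVariationOn γ (Icc 0 1)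

/-- The `t`-th term (for `t : Fin (m+1)`, `0 ≤ t ≤ m`) in the maximum defining the
length of the candidate path determined by a sequence `c` of `m` distinct indices
(0-based: values in `{2,…,n-1}`, corresponding to the paper's `{3,…,n}`) and signs `ε`.
For `m = 0` the single term is `2 - a₂ - b₁`; otherwise the term for `t = 0` is
`2 - a₂ + ε_{c 0} * b_{c 0}`, the term for `t = m` is `2 + ε_{c (m-1)} * a_{c (m-1)} - b₁`,
and the term for `0 < t < m` is `2 + ε_{c (t-1)} * a_{c (t-1)} + ε_{c t} * b_{c t}`.
Here `a₂ = A 1` and `b₁ = B 0` (0-based coordinates). -/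
noncomputable def chainTerm {n : ℕ} (hn : 3 ≤ n) (A B : Fin n → ℝ)
    {m : ℕ} (c : Fin m → Fin n) (ε : Fin m → ℝ) (t : Fin (m + 1)) : ℝ :=
  2 +
    (if h : (t : ℕ) = 0 then -A ⟨1, by omega⟩
      else ε ⟨(t : ℕ) - 1, by have := t.isLt; omega⟩ *
        A (c ⟨(t : ℕ) - 1, by have := t.isLt; omega⟩)) +
    (if h : (t : ℕ) = m then -B ⟨0, by omega⟩
      else ε ⟨(t : ℕ), by have := t.isLt; omega⟩ *
        B (c ⟨(t : ℕ), by have := t.isLt; omega⟩))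

/-- The length of the candidate path determined by `c` and `ε`: the maximum of the
chain terms together with the terms `|a_p - b_p|` for the (0-based) coordinates
`p ∈ {2,…,n-1}` not appearing in `c`. -/
noncomputable def candidateLength {n : ℕ} (hn : 3 ≤ n) (A B : Fin n → ℝ)
    {m : ℕ} (c : Fin m → Fin n) (ε : Fin m → ℝ) : ℝ :=
  sSup (Set.range (chainTerm hn A B c ε) ∪
    {x | ∃ p : Fin n, 2 ≤ (p : ℕ) ∧ (∀ t, c t ≠ p) ∧ x = |A p - B p|})

namespace S18

open scoped Classical

/-! ### Generic helpers -/

lemma sign_abs {w a : ℝ} (hw : w = 1 ∨ w = -1) (ha : a ∈ Icc (-1:ℝ) 1) :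
    |w - a| = 1 - w * a := by
  obtain ⟨h1, h2⟩ := ha
  rcases hw with rfl | rfl
  · rw [abs_of_nonneg (by linarith)]; ring
  · rw [abs_of_nonpos (by linarith)]; ring

lemma norm_eq_one_of {n : ℕ} (x : Fin n → ℝ) (hb : ∀ i, |x i| ≤ 1) (i₀ : Fin n)
    (h : |x i₀| = 1) : ‖x‖ = 1 := by
  refine le_antisymm ?_ ?_
  · exact (pi_norm_le_iff_of_nonneg (by norm_num)).2 fun i => by
      rw [Real.norm_eq_abs]; exact hb i
  · calc (1:ℝ) = ‖x i₀‖ := by rw [Real.norm_eq_abs, h]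
      _ ≤ ‖x‖ := norm_le_pi_norm x i₀

lemma exists_abs_eq_one {n : ℕ} (hn : 0 < n) (x : Fin n → ℝ) (h : ‖x‖ = 1) :
    ∃ i, |x i| = 1 := by
  obtain ⟨i₀, -, hi₀⟩ := Finset.exists_max_image (Finset.univ : Finset (Fin n))
    (fun i => |x i|) ⟨⟨0, hn⟩, Finset.mem_univ _⟩
  refine ⟨i₀, le_antisymm ?_ ?_⟩
  · calc |x i₀| = ‖x i₀‖ := (Real.norm_eq_abs _).symm
      _ ≤ ‖x‖ := norm_le_pi_norm x i₀
      _ = 1 := h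
  · calc (1:ℝ) = ‖x‖ := h.symm
      _ ≤ |x i₀| := (pi_norm_le_iff_of_nonneg (abs_nonneg _)).2 fun i => by
          rw [Real.norm_eq_abs]; exact hi₀ i (Finset.mem_univ i)

/-! ### eVariation helpers -/

lemma evar_coord_le {n : ℕ} (γ : ℝ → Fin n → ℝ) (s : Set ℝ) (i : Fin n) :
    eVariationOn (fun t => γ t i) s ≤ eVariationOn γ s := by
  apply iSup_le
  rintro ⟨N, u, hu, us⟩
  refine le_trans (Finset.sum_le_sum fun j _ => ?_) (eVariationOn.sum_le (f := γ) (n := N) hu us)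
  exact edist_le_pi_edist (γ (u (j+1))) (γ (u j)) i

lemma coord_abs_le {n : ℕ} (γ : ℝ → Fin n → ℝ) (i : Fin n) {x y : ℝ} (hxy : x ≤ y)
    (hfin : eVariationOn γ (Icc x y) ≠ ⊤) :
    |γ y i - γ x i| ≤ (eVariationOn γ (Icc x y)).toReal := by
  have h1 : edist (γ y i) (γ x i) ≤ eVariationOn (fun t => γ t i) (Icc x y) :=
    eVariationOn.edist_le _ ⟨hxy, le_rfl⟩ ⟨le_rfl, hxy⟩
  have h2 := h1.trans (evar_coord_le γ (Icc x y) i)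
  rw [edist_dist, Real.dist_eq] at h2
  exact (ENNReal.ofReal_le_iff_le_toReal hfin).1 h2

lemma evar_le_of_lip {n : ℕ} (γ : ℝ → Fin n → ℝ) {C : ℝ} (hC : 0 ≤ C)
    (h : ∀ s ∈ Icc (0:ℝ) 1, ∀ t ∈ Icc (0:ℝ) 1, s ≤ t → ∀ i, |γ t i - γ s i| ≤ C * (t - s)) :
    eVariationOn γ (Icc 0 1) ≤ ENNReal.ofReal C := by
  apply iSup_le
  rintro ⟨N, u, hu, us⟩
  have key : ∀ j : ℕ, edist (γ (u (j+1))) (γ (u j)) ≤ ENNReal.ofReal (C * (u (j+1) - u j)) := by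
    intro j
    rw [edist_pi_def]
    apply Finset.sup_le
    intro i _
    rw [edist_dist, Real.dist_eq]
    exact ENNReal.ofReal_le_ofReal (h _ (us j) _ (us (j+1)) (hu (Nat.le_succ j)) i)
  calc ∑ i ∈ Finset.range N, edist (γ (u (i+1))) (γ (u i))
      ≤ ∑ i ∈ Finset.range N, ENNReal.ofReal (C * (u (i+1) - u i)) :=
        Finset.sum_le_sum fun i _ => key i
    _ = ENNReal.ofReal (∑ i ∈ Finset.range N, C * (u (i+1) - u i)) := by
        rw [ENNReal.ofReal_sum_of_nonneg]
        intro i _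
        have h2 := hu (Nat.le_succ i)
        exact mul_nonneg hC (by linarith)
    _ = ENNReal.ofReal (C * (u N - u 0)) := by
        rw [← Finset.mul_sum, Finset.sum_range_sub (fun i => u i)]
    _ ≤ ENNReal.ofReal C := by
        apply ENNReal.ofReal_le_ofReal
        have h0 := (us 0).1
        have h1 := (us N).2
        nlinarith


lemma evar_right_cont {n : ℕ} {γ : ℝ → Fin n → ℝ} (hγ : ContinuousOn γ (Icc 0 1))
    (hfin : eVariationOn γ (Icc 0 1) ≠ ⊤) {x : ℝ} (hx0 : 0 ≤ x) (hx1 : x < 1)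
    {ε : ℝ} (hε : 0 < ε) :
    ∃ y, x < y ∧ y ≤ 1 ∧ eVariationOn γ (Icc x y) ≤ ENNReal.ofReal ε := by
  set R := eVariationOn γ (Icc x 1) with hR
  have hRfin : R ≠ ⊤ :=
    ne_top_of_le_ne_top hfin (eVariationOn.mono γ (Icc_subset_Icc hx0 le_rfl))
  by_cases hRsmall : R ≤ ENNReal.ofReal ε
  · exact ⟨1, hx1, le_rfl, hRsmall⟩
  push_neg at hRsmall
  -- continuity at x
  have hc : ContinuousWithinAt γ (Icc 0 1) x := hγ x ⟨hx0, hx1.le⟩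
  obtain ⟨δ, hδpos, hδ⟩ := Metric.continuousWithinAt_iff.1 hc (ε/4) (by linarith)
  -- a partition with large sum
  have hsub : R - ENNReal.ofReal (ε/2) < R := by
    refine ENNReal.sub_lt_self hRfin ?_ ?_
    · intro h; rw [h] at hRsmall; exact absurd hRsmall (by simp)
    · simp only [ne_eq, ENNReal.ofReal_eq_zero, not_le]; linarith
  have hsup : R - ENNReal.ofReal (ε/2) <
      ⨆ p : ℕ × { u : ℕ → ℝ // Monotone u ∧ ∀ i, u i ∈ Icc x 1 },
        ∑ i ∈ Finset.range p.1, edist (γ (p.2.1 (i + 1))) (γ (p.2.1 i)) := hsub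
  obtain ⟨⟨N, u, hu, us⟩, hsum⟩ := lt_iSup_iff.1 hsup
  simp only at hsum
  have hzero : ∀ i j : ℕ, u i = x → u j = x →
      edist (γ (u j)) (γ (u i)) = 0 := by
    intro i j hi hj; rw [hi, hj, edist_self]
  by_cases hex : ∃ i, x < u i
  · set j' := Nat.find hex with hj'def
    have hj' : x < u j' := Nat.find_spec hex
    have hbefore : ∀ i < j', u i = x := by
      intro i hi
      exact le_antisymm (not_lt.1 (Nat.find_min hex hi)) (us i).1
    by_cases hj'N : N < j'
    · -- all partition points up to N equal x, sum = 0, contradiction-ish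
      exfalso
      have : ∑ i ∈ Finset.range N, edist (γ (u (i + 1))) (γ (u i)) = 0 := by
        apply Finset.sum_eq_zero
        intro i hi
        rw [Finset.mem_range] at hi
        exact hzero i (i+1) (hbefore i (by omega)) (hbefore (i+1) (by omega))
      rw [this] at hsum
      exact absurd hsum (by simp)
    push_neg at hj'N
    set y := min (u j') (x + δ/2) with hy
    have hyx : x < y := lt_min hj' (by linarith)
    have hy1 : y ≤ 1 := le_trans (min_le_left _ _) (us j').2
    have hyd : dist (γ y) (γ x) < ε/4 := by
      apply hδ ⟨le_trans hx0 hyx.le, hy1⟩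
      rw [Real.dist_eq, abs_of_nonneg (by linarith)]
      have : y ≤ x + δ/2 := min_le_right _ _
      linarith
    have hyed : edist (γ y) (γ x) ≤ ENNReal.ofReal (ε/4) := by
      rw [edist_dist]; exact ENNReal.ofReal_le_ofReal hyd.le
    -- new partition of Icc y 1
    set u' : ℕ → ℝ := fun i => if i = 0 then y else u (j' + i - 1) with hu'
    have hu'mono : Monotone u' := by
      intro a b hab
      rcases Nat.eq_zero_or_pos a with rfl | ha
      · rcases Nat.eq_zero_or_pos b with rfl | hb
        · exact le_rfl
        · simp only [hu', if_pos rfl, if_neg (by omega : b ≠ 0)]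
          exact le_trans (min_le_left _ _) (hu (by omega))
      · have hb : 0 < b := lt_of_lt_of_le ha hab
        simp only [hu', if_neg (by omega : a ≠ 0), if_neg (by omega : b ≠ 0)]
        exact hu (by omega)
    have hu'mem : ∀ i, u' i ∈ Icc y 1 := by
      intro i
      rcases Nat.eq_zero_or_pos i with rfl | hi
      · exact ⟨le_rfl, hy1⟩
      · simp only [hu', if_neg (by omega : i ≠ 0)]
        constructor
        · exact le_trans (min_le_left _ _) (hu (by omega))
        · exact (us _).2
    set K := N - j' + 1 with hK
    have hSig : ∑ i ∈ Finset.range K, edist (γ (u' (i + 1))) (γ (u' i)) ≤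
        eVariationOn γ (Icc y 1) := eVariationOn.sum_le (f := γ) (n := K) hu'mono hu'mem
    -- compare sums
    have hcomp : ∑ i ∈ Finset.range N, edist (γ (u (i + 1))) (γ (u i)) ≤
        (∑ i ∈ Finset.range K, edist (γ (u' (i + 1))) (γ (u' i))) + edist (γ y) (γ x) := by
      rcases Nat.eq_zero_or_pos j' with hj'0 | hj'pos
      · -- j' = 0 : u' = y, u 0, u 1, ...
        have hKN : K = N + 1 := by omega
        rw [hKN, Finset.sum_range_succ']
        have h1 : ∀ i ∈ Finset.range N,
            edist (γ (u (i+1))) (γ (u i)) = edist (γ (u' (i + 1 + 1))) (γ (u' (i + 1))) := by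
          intro i _
          simp only [hu', if_neg (by omega : i + 1 + 1 ≠ 0), if_neg (by omega : i + 1 ≠ 0)]
          have e1 : j' + (i + 1 + 1) - 1 = i + 1 := by omega
          have e2 : j' + (i + 1) - 1 = i := by omega
          rw [e1, e2]
        rw [Finset.sum_congr rfl h1]
        exact le_add_right (le_add_right le_rfl)
      · -- j' ≥ 1
        have hsplit : Finset.range N = Finset.Ico 0 N := by rw [Finset.range_eq_Ico]
        rw [hsplit, ← Finset.sum_Ico_consecutive _ (Nat.zero_le (j'-1)) (by omega : j' - 1 ≤ N)]
        have hfirst : ∑ i ∈ Finset.Ico 0 (j'-1), edist (γ (u (i + 1))) (γ (u i)) = 0 := by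
          apply Finset.sum_eq_zero
          intro i hi
          rw [Finset.mem_Ico] at hi
          exact hzero i (i+1) (hbefore i (by omega)) (hbefore (i+1) (by omega))
        rw [hfirst, zero_add, Finset.sum_Ico_eq_sum_range]
        have hNK : N - (j' - 1) = K := by omega
        rw [hNK]
        have hKpos : K = (K - 1) + 1 := by omega
        rw [hKpos, Finset.sum_range_succ', Finset.sum_range_succ']
        have hmid : ∀ i ∈ Finset.range (K-1),
            edist (γ (u (j' - 1 + (i+1) + 1))) (γ (u (j' - 1 + (i+1)))) =
            edist (γ (u' (i + 1 + 1))) (γ (u' (i + 1))) := by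
          intro i _
          simp only [hu', if_neg (by omega : i + 1 + 1 ≠ 0), if_neg (by omega : i + 1 ≠ 0)]
          have e1 : j' - 1 + (i + 1) + 1 = j' + (i + 1 + 1) - 1 := by omega
          have e2 : j' - 1 + (i + 1) = j' + (i + 1) - 1 := by omega
          rw [e1, e2]
        rw [Finset.sum_congr rfl hmid]
        have hg0 : edist (γ (u (j' - 1 + 0 + 1))) (γ (u (j' - 1 + 0))) =
            edist (γ (u j')) (γ x) := by
          have h1 : j' - 1 + 0 + 1 = j' := by omega
          rw [h1, hbefore (j' - 1 + 0) (by omega)]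
        have hg0' : edist (γ (u' (0 + 1))) (γ (u' 0)) = edist (γ (u j')) (γ y) := by
          simp only [hu', if_neg (by omega : 0 + 1 ≠ 0), if_pos rfl]
          have e : j' + (0 + 1) - 1 = j' := by omega
          rw [e]
        rw [hg0, hg0']
        rw [add_assoc]
        refine add_le_add le_rfl ?_
        calc edist (γ (u j')) (γ x) ≤ edist (γ (u j')) (γ y) + edist (γ y) (γ x) :=
              edist_triangle _ _ _
          _ = _ := rfl
    -- put it together
    have hadd : eVariationOn γ (Icc x y) + eVariationOn γ (Icc y 1) = R := by
      have h := eVariationOn.Icc_add_Icc γ (s := univ) hyx.le hy1 (mem_univ y)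
      simpa using h
    have hRlt : R < ∑ i ∈ Finset.range N, edist (γ (u (i + 1))) (γ (u i)) +
        ENNReal.ofReal (ε/2) := by
      rw [← ENNReal.sub_lt_iff_lt_right (by simp) ?hle]
      · exact hsum
      case hle =>
        refine le_trans ?_ hRsmall.le
        exact ENNReal.ofReal_le_ofReal (by linarith)
    have hfin2 : eVariationOn γ (Icc y 1) ≠ ⊤ := by
      intro h
      rw [← hadd, h] at hRfin
      simp at hRfin
    have : eVariationOn γ (Icc x y) + eVariationOn γ (Icc y 1) <
        eVariationOn γ (Icc y 1) + ENNReal.ofReal ε := by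
      rw [hadd]
      calc R < ∑ i ∈ Finset.range N, edist (γ (u (i + 1))) (γ (u i)) +
            ENNReal.ofReal (ε/2) := hRlt
        _ ≤ (eVariationOn γ (Icc y 1) + ENNReal.ofReal (ε/4)) + ENNReal.ofReal (ε/2) := by
            refine add_le_add ?_ le_rfl
            exact le_trans hcomp (add_le_add hSig hyed)
        _ ≤ eVariationOn γ (Icc y 1) + ENNReal.ofReal ε := by
            rw [add_assoc]
            refine add_le_add le_rfl ?_
            rw [← ENNReal.ofReal_add (by linarith) (by linarith)]
            exact ENNReal.ofReal_le_ofReal (by linarith)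
    have h2 : eVariationOn γ (Icc y 1) + eVariationOn γ (Icc x y) <
        eVariationOn γ (Icc y 1) + ENNReal.ofReal ε := by
      rwa [add_comm (eVariationOn γ (Icc x y))] at this
    exact ⟨y, hyx, hy1, ((ENNReal.add_lt_add_iff_left hfin2).1 h2).le⟩
  · -- no partition point exceeds x : sum is 0, contradiction
    push_neg at hex
    exfalso
    have : ∑ i ∈ Finset.range N, edist (γ (u (i + 1))) (γ (u i)) = 0 := by
      apply Finset.sum_eq_zero
      intro i _
      exact hzero i (i+1) (le_antisymm (hex i) (us i).1)
        (le_antisymm (hex (i+1)) (us (i+1)).1)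
    rw [this] at hsum
    exact absurd hsum (by simp)


lemma evar_left_cont {n : ℕ} {γ : ℝ → Fin n → ℝ} (hγ : ContinuousOn γ (Icc 0 1))
    (hfin : eVariationOn γ (Icc 0 1) ≠ ⊤) {x : ℝ} (hx0 : 0 < x) (hx1 : x ≤ 1)
    {ε : ℝ} (hε : 0 < ε) :
    ∃ y, 0 ≤ y ∧ y < x ∧ eVariationOn γ (Icc y x) ≤ ENNReal.ofReal ε := by
  set γ' : ℝ → Fin n → ℝ := fun s => γ (1 - s) with hγ'def
  have hcomp : γ' = γ ∘ (fun s : ℝ => 1 - s) := rfl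
  have hrev : ∀ a b : ℝ, eVariationOn γ' (Icc a b) = eVariationOn γ (Icc (1-b) (1-a)) := by
    intro a b
    have hanti : AntitoneOn (fun s : ℝ => 1 - s) (Icc a b) := by
      intro u _ v _ huv
      simp only
      linarith
    rw [hcomp, eVariationOn.comp_eq_of_antitoneOn γ _ hanti]
    congr 1
    rw [Set.image_const_sub_Icc]
  have hγ'c : ContinuousOn γ' (Icc 0 1) := by
    rw [hcomp]
    apply hγ.comp ((continuous_const.sub continuous_id).continuousOn)
    intro s hs
    obtain ⟨h1, h2⟩ := hs
    constructor
    · simp only [Pi.sub_apply, id]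
      linarith
    · simp only [Pi.sub_apply, id]
      linarith
  have hfin' : eVariationOn γ' (Icc 0 1) ≠ ⊤ := by
    rw [hrev 0 1]
    simpa using hfin
  obtain ⟨y', hy1, hy2, hy3⟩ := evar_right_cont hγ'c hfin' (x := 1 - x)
    (by linarith) (by linarith) hε
  refine ⟨1 - y', by linarith, by linarith, ?_⟩
  rw [hrev (1-x) y'] at hy3
  have he : 1 - (1 - x) = x := by ring
  rwa [he] at hy3

/-! ### Chain extraction from a cover by closed sets -/

lemma chain_cover_aux {ι : Type*} [Fintype ι] (S : ι → Set ℝ) (hcl : ∀ p, IsClosed (S p))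
    {l r : ℝ} (hlr : l ≤ r) (hsub : ∀ p, S p ⊆ Icc l r)
    (hcov : ∀ x ∈ Icc l r, ∃ p, x ∈ S p) :
    ∀ (N : ℕ) (p₀ : ι), (S p₀).Nonempty →
      (Finset.univ.filter (fun p => (S p).Nonempty ∧ sInf (S p) < sInf (S p₀))).card ≤ N →
      ∃ (m : ℕ) (e : ℕ → ι), e 0 = p₀ ∧
        (∀ j < m, sInf (S (e j)) ≤ sSup (S (e (j+1)))) ∧
        (∀ j < m, sInf (S (e (j+1))) < sInf (S (e j))) ∧
        sInf (S (e m)) ≤ l ∧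
        (∀ j ≤ m, (S (e j)).Nonempty) := by
  have bddb : ∀ p, BddBelow (S p) := fun p => (bddBelow_Icc).mono (hsub p)
  have bddu : ∀ p, BddAbove (S p) := fun p => (bddAbove_Icc).mono (hsub p)
  have step : ∀ p₀ : ι, (S p₀).Nonempty → l < sInf (S p₀) →
      ∃ q, (S q).Nonempty ∧ sInf (S q) < sInf (S p₀) ∧ sInf (S p₀) ≤ sSup (S q) := by
    intro p₀ hne hl
    set x' := sInf (S p₀) with hx'
    have hx'mem : x' ∈ S p₀ := (hcl p₀).csInf_mem hne (bddb p₀)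
    have hx'Icc : x' ∈ Icc l r := hsub p₀ hx'mem
    set C := Finset.univ.filter (fun p => (S p).Nonempty ∧ sSup (S p) < x') with hC
    set U := if hCne : C.Nonempty then max l (C.sup' hCne fun p => sSup (S p)) else l with hU
    have hUl : l ≤ U := by
      rw [hU]; split
      · exact le_max_left _ _
      · exact le_rfl
    have hUx : U < x' := by
      rw [hU]; split
      · rename_i hCne
        rw [max_lt_iff]
        refine ⟨hl, ?_⟩
        rw [Finset.sup'_lt_iff]
        intro p hp
        exact ((Finset.mem_filter.1 hp).2).2
      · exact hl
    have hUb : ∀ p ∈ C, sSup (S p) ≤ U := by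
      intro p hp
      have hCne : C.Nonempty := ⟨p, hp⟩
      rw [hU, dif_pos hCne]
      exact le_max_of_le_right (Finset.le_sup' (fun p => sSup (S p)) hp)
    set y := (U + x') / 2 with hy
    have hyU : U < y := by rw [hy]; linarith
    have hyx : y < x' := by rw [hy]; linarith
    have hyIcc : y ∈ Icc l r := ⟨le_trans hUl hyU.le, le_trans hyx.le hx'Icc.2⟩
    obtain ⟨q, hq⟩ := hcov y hyIcc
    have hqne : (S q).Nonempty := ⟨y, hq⟩
    have hqC : q ∉ C := by
      intro hqC
      have := hUb q hqC
      have := le_csSup (bddu q) hq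
      linarith
    have hqS : x' ≤ sSup (S q) := by
      by_contra hcon
      exact hqC (Finset.mem_filter.2 ⟨Finset.mem_univ _, hqne, lt_of_not_ge hcon⟩)
    exact ⟨q, hqne, lt_of_le_of_lt (csInf_le (bddb q) hq) hyx, hqS⟩
  intro N
  induction N with
  | zero =>
    intro p₀ hne hcard
    rcases le_or_gt (sInf (S p₀)) l with hl | hl
    · exact ⟨0, fun _ => p₀, rfl, by omega, by omega, hl, fun j _ => hne⟩
    · obtain ⟨q, hqne, hqlt, -⟩ := step p₀ hne hl
      exfalso
      have : q ∈ Finset.univ.filter (fun p => (S p).Nonempty ∧ sInf (S p) < sInf (S p₀)) :=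
        Finset.mem_filter.2 ⟨Finset.mem_univ _, hqne, hqlt⟩
      have := Finset.card_pos.2 ⟨q, this⟩
      omega
  | succ N ih =>
    intro p₀ hne hcard
    rcases le_or_gt (sInf (S p₀)) l with hl | hl
    · exact ⟨0, fun _ => p₀, rfl, by omega, by omega, hl, fun j _ => hne⟩
    · obtain ⟨q, hqne, hqlt, hqS⟩ := step p₀ hne hl
      have hqmem : q ∈ Finset.univ.filter
          (fun p => (S p).Nonempty ∧ sInf (S p) < sInf (S p₀)) :=
        Finset.mem_filter.2 ⟨Finset.mem_univ _, hqne, hqlt⟩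
      have hsubset : Finset.univ.filter (fun p => (S p).Nonempty ∧ sInf (S p) < sInf (S q)) ⊆
          (Finset.univ.filter (fun p => (S p).Nonempty ∧ sInf (S p) < sInf (S p₀))).erase q := by
        intro p hp
        rw [Finset.mem_filter] at hp
        refine Finset.mem_erase.2 ⟨?_, Finset.mem_filter.2 ⟨Finset.mem_univ _, hp.2.1,
          hp.2.2.trans hqlt⟩⟩
        intro h; subst h; exact absurd hp.2.2 (lt_irrefl _)
      have hcard' : (Finset.univ.filter
          (fun p => (S p).Nonempty ∧ sInf (S p) < sInf (S q))).card ≤ N := by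
        have h1 := Finset.card_le_card hsubset
        rw [Finset.card_erase_of_mem hqmem] at h1
        omega
      obtain ⟨m', e', he0, hlink, hstrict, hlast, hnon⟩ := ih q hqne hcard'
      refine ⟨m' + 1, fun j => if j = 0 then p₀ else e' (j-1), by simp, ?_, ?_, ?_, ?_⟩
      · intro j hj
        rcases Nat.eq_zero_or_pos j with rfl | hjpos
        · simpa [he0] using hqS
        · have h0 : j ≠ 0 := by omega
          have h1 : j + 1 ≠ 0 := by omega
          simp only [h0, h1, if_false]
          have : j - 1 < m' := by omega
          have := hlink (j-1) this
          have hj1 : j + 1 - 1 = (j-1) + 1 := by omega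
          rw [hj1]
          exact this
      · intro j hj
        rcases Nat.eq_zero_or_pos j with rfl | hjpos
        · simpa [he0] using hqlt
        · have h0 : j ≠ 0 := by omega
          have h1 : j + 1 ≠ 0 := by omega
          simp only [h0, h1, if_false]
          have : j - 1 < m' := by omega
          have := hstrict (j-1) this
          have hj1 : j + 1 - 1 = (j-1) + 1 := by omega
          rw [hj1]
          exact this
      · simp only [Nat.succ_ne_zero, if_false, Nat.add_sub_cancel]
        exact hlast
      · intro j hj
        rcases Nat.eq_zero_or_pos j with rfl | hjpos
        · simpa using hne
        · have h0 : j ≠ 0 := by omega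
          simp only [h0, if_false]
          exact hnon (j-1) (by omega)

lemma chain_cover {ι : Type*} [Fintype ι] (S : ι → Set ℝ) (hcl : ∀ p, IsClosed (S p))
    {l r : ℝ} (hlr : l ≤ r) (hsub : ∀ p, S p ⊆ Icc l r)
    (hcov : ∀ x ∈ Icc l r, ∃ p, x ∈ S p) :
    ∃ (m : ℕ) (e : ℕ → ι),
      r ∈ S (e 0) ∧
      (∀ j < m, sInf (S (e j)) ≤ sSup (S (e (j+1)))) ∧
      (∀ j < m, sInf (S (e (j+1))) < sInf (S (e j))) ∧
      sInf (S (e m)) ≤ l ∧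
      (∀ j ≤ m, (S (e j)).Nonempty) := by
  obtain ⟨p₀, hp₀⟩ := hcov r ⟨hlr, le_rfl⟩
  obtain ⟨m, e, he0, h1, h2, h3, h4⟩ := chain_cover_aux S hcl hlr hsub hcov
    (Fintype.card ι) p₀ ⟨r, hp₀⟩ (le_trans (Finset.card_filter_le _ _) (by simp))
  exact ⟨m, e, by rw [he0]; exact hp₀, h1, h2, h3, h4⟩

/-- From consecutive strict decrease to pairwise. -/
lemma strict_of_consec {m : ℕ} (f : ℕ → ℝ) (h : ∀ j < m, f (j+1) < f j) :
    ∀ i j, i < j → j ≤ m → f j < f i := by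
  intro i j hij hjm
  induction j with
  | zero => omega
  | succ k ih =>
    rcases Nat.lt_or_ge i k with hik | hik
    · exact (h k (by omega)).trans (ih (by omega) (by omega))
    · have : i = k := by omega
      subst this
      exact h i (by omega)

end S18

section Main

namespace S18

/-! ### The upper bound : every candidate length is achieved by a path -/

lemma chainTerm_eval {n : ℕ} (hn : 3 ≤ n) (A B : Fin n → ℝ) {m : ℕ}
    (c : Fin m → Fin n) (ε : Fin m → ℝ) (j : ℕ) (hj : j < m + 1) :
    chainTerm hn A B c ε ⟨j, hj⟩ =
      2 + (if _ : j = 0 then -A ⟨1, by omega⟩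
        else ε ⟨j - 1, by omega⟩ * A (c ⟨j - 1, by omega⟩)) +
      (if _ : j = m then -B ⟨0, by omega⟩
        else ε ⟨j, by omega⟩ * B (c ⟨j, by omega⟩)) := rfl

lemma nat_min_exists {P : ℕ → Prop} (h : ∃ j, P j) : ∃ j, P j ∧ ∀ k, k < j → ¬ P k := by
  classical
  obtain ⟨j, hj⟩ := h
  induction j using Nat.strong_induction_on with
  | _ j ih =>
    by_cases hk : ∃ k, k < j ∧ P k
    · obtain ⟨k, hk1, hk2⟩ := hk
      exact ih k hk1 hk2
    · push_neg at hk
      exact ⟨j, hj, hk⟩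

set_option maxHeartbeats 2000000 in
theorem upper {n : ℕ} (hn : 3 ≤ n) (A B : Fin n → ℝ)
    (hA1 : A ⟨0, by linarith⟩ = 1) (hB2 : B ⟨1, by linarith⟩ = 1)
    (hA : ∀ i, A i ∈ Icc (-1:ℝ) 1) (hB : ∀ i, B i ∈ Icc (-1:ℝ) 1)
    {m : ℕ} (c : Fin m → Fin n) (ε : Fin m → ℝ)
    (hinj : Function.Injective c) (hge2 : ∀ t, 2 ≤ ((c t : ℕ)))
    (hε : ∀ t, ε t = 1 ∨ ε t = -1) :
    geoDist A B ≤ ENNReal.ofReal (candidateLength hn A B c ε) := by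
  classical
  set L := candidateLength hn A B c ε with hLdef
  have hεA : ∀ (t' : Fin m) (i : Fin n), ε t' * A i ∈ Icc (-1:ℝ) 1 := by
    intro t' i
    have h1 := (hA i).1; have h2 := (hA i).2
    rcases hε t' with h | h <;> rw [h] <;> constructor <;> nlinarith
  have hεB : ∀ (t' : Fin m) (i : Fin n), ε t' * B i ∈ Icc (-1:ℝ) 1 := by
    intro t' i
    have h1 := (hB i).1; have h2 := (hB i).2
    rcases hε t' with h | h <;> rw [h] <;> constructor <;> nlinarith
  have hbdd : BddAbove (Set.range (chainTerm hn A B c ε) ∪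
      {x | ∃ p : Fin n, 2 ≤ (p : ℕ) ∧ (∀ t, c t ≠ p) ∧ x = |A p - B p|}) := by
    refine ⟨4, ?_⟩
    rintro q (⟨t, rfl⟩ | ⟨p, -, -, rfl⟩)
    · rcases t with ⟨j, hj⟩
      rw [chainTerm_eval]
      split_ifs with hh1 hh2 hh3
      · have := (hA ⟨1, by omega⟩).1; have := (hB ⟨0, by omega⟩).1; linarith
      · have := (hA ⟨1, by omega⟩).1
        have := (hεB ⟨j, by omega⟩ (c ⟨j, by omega⟩)).2
        linarith
      · have := (hB ⟨0, by omega⟩).1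
        have := (hεA ⟨j-1, by omega⟩ (c ⟨j-1, by omega⟩)).2
        linarith
      · have := (hεA ⟨j-1, by omega⟩ (c ⟨j-1, by omega⟩)).2
        have := (hεB ⟨j, by omega⟩ (c ⟨j, by omega⟩)).2
        linarith
    · have h1 := (hA p).1; have h2 := (hA p).2; have h3 := (hB p).1; have h4 := (hB p).2
      rw [abs_le]; constructor <;> linarith
  have hle : ∀ q ∈ (Set.range (chainTerm hn A B c ε) ∪
      {x | ∃ p : Fin n, 2 ≤ (p : ℕ) ∧ (∀ t, c t ≠ p) ∧ x = |A p - B p|}), q ≤ L :=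
    fun q hq => le_csSup hbdd hq
  have hterm_le : ∀ t : Fin (m+1), chainTerm hn A B c ε t ≤ L :=
    fun t => hle _ (Or.inl ⟨t, rfl⟩)
  have hdrift_le : ∀ p : Fin n, 2 ≤ (p : ℕ) → (∀ t, c t ≠ p) → |A p - B p| ≤ L :=
    fun p h1 h2 => hle _ (Or.inr ⟨p, h1, h2, rfl⟩)
  -- the chain data
  set κ : ℕ → Fin n := fun j =>
    if _ : j = 0 then (⟨1, by omega⟩ : Fin n)
    else if _ : j ≤ m then c ⟨j-1, by omega⟩ else ⟨0, by omega⟩ with hκdef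
  set w : ℕ → ℝ := fun j =>
    if _ : j = 0 then 1
    else if _ : j ≤ m then -ε ⟨j-1, by omega⟩ else 1 with hwdef
  have hw : ∀ j, w j = 1 ∨ w j = -1 := by
    intro j
    simp only [hwdef]
    split_ifs with h1 h2
    · exact Or.inl rfl
    · rcases hε ⟨j-1, by omega⟩ with h | h <;> rw [h] <;> [right; left] <;> norm_num
    · exact Or.inl rfl
  set Aw : ℕ → ℝ := fun j => 1 - w j * A (κ j) with hAwdef
  set Bw : ℕ → ℝ := fun j => 1 - w j * B (κ j) with hBwdef
  have hsq : ∀ j, w j * w j = 1 := by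
    intro j; rcases hw j with h | h <;> rw [h] <;> norm_num
  have habsw : ∀ j, |w j| = 1 := by
    intro j; rcases hw j with h | h <;> rw [h] <;> norm_num
  have hwA : ∀ j, w j * A (κ j) ∈ Icc (-1:ℝ) 1 := by
    intro j
    have h1 := (hA (κ j)).1; have h2 := (hA (κ j)).2
    rcases hw j with h | h <;> rw [h] <;> constructor <;> nlinarith
  have hwB : ∀ j, w j * B (κ j) ∈ Icc (-1:ℝ) 1 := by
    intro j
    have h1 := (hB (κ j)).1; have h2 := (hB (κ j)).2
    rcases hw j with h | h <;> rw [h] <;> constructor <;> nlinarith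
  have hAw02 : ∀ j, 0 ≤ Aw j ∧ Aw j ≤ 2 := by
    intro j; have h1 := (hwA j).1; have h2 := (hwA j).2
    constructor <;> simp only [hAwdef] <;> linarith
  have hBw02 : ∀ j, 0 ≤ Bw j ∧ Bw j ≤ 2 := by
    intro j; have h1 := (hwB j).1; have h2 := (hwB j).2
    constructor <;> simp only [hBwdef] <;> linarith
  -- component evaluations
  have hw0 : w 0 = 1 := rfl
  have hκ0' : κ 0 = ⟨1, by omega⟩ := rfl
  have hwlast : ∀ j, m < j → w j = 1 := by
    intro j hj
    simp only [hwdef]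
    rw [dif_neg (show ¬ j = 0 from by omega), dif_neg (show ¬ j ≤ m from by omega)]
  have hκlast' : ∀ j, m < j → κ j = ⟨0, by omega⟩ := by
    intro j hj
    simp only [hκdef]
    rw [dif_neg (show ¬ j = 0 from by omega), dif_neg (show ¬ j ≤ m from by omega)]
  have hwmid : ∀ j (h1 : 1 ≤ j) (h2 : j ≤ m), w j = -ε ⟨j-1, by omega⟩ := by
    intro j h1 h2
    simp only [hwdef]
    rw [dif_neg (show ¬ j = 0 from by omega), dif_pos h2]
  have hκmid : ∀ j (h1 : 1 ≤ j) (h2 : j ≤ m), κ j = c ⟨j-1, by omega⟩ := by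
    intro j h1 h2
    simp only [hκdef]
    rw [dif_neg (show ¬ j = 0 from by omega), dif_pos h2]
  have hwmid' : ∀ k (hk : k < m), w (k+1) = -ε ⟨k, by omega⟩ := by
    intro k hk
    rw [hwmid (k+1) (by omega) (by omega)]
    exact congrArg (fun x => -ε x) (Fin.ext (by simp))
  have hκmid' : ∀ k (hk : k < m), κ (k+1) = c ⟨k, by omega⟩ := by
    intro k hk
    rw [hκmid (k+1) (by omega) (by omega)]
    exact congrArg c (Fin.ext (by simp))
  -- chain terms
  have hterm : ∀ j, j ≤ m → Aw j + Bw (j+1) ≤ L := by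
    intro j hj
    have heq : Aw j + Bw (j+1) = chainTerm hn A B c ε ⟨j, by omega⟩ := by
      rw [chainTerm_eval hn A B c ε j (by omega)]
      simp only [hAwdef, hBwdef]
      rcases Nat.eq_zero_or_pos j with rfl | hjpos
      · rcases Nat.eq_zero_or_pos m with rfl | hmpos
        · rw [dif_pos rfl, dif_pos rfl, hw0, hκ0', hwlast 1 (by omega),
            hκlast' 1 (by omega)]
          ring
        · rw [dif_pos rfl, dif_neg (show ¬ (0:ℕ) = m from by omega), hw0, hκ0',
            hwmid' 0 (by omega), hκmid' 0 (by omega)]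
          ring
      · rcases Nat.lt_or_ge j m with hjm | hjm
        · rw [dif_neg (show ¬ j = 0 from by omega), dif_neg (show ¬ j = m from by omega),
            hwmid j (by omega) (by omega), hκmid j (by omega) (by omega),
            hwmid' j hjm, hκmid' j hjm]
          ring
        · rw [dif_neg (show ¬ j = 0 from by omega), dif_pos (show j = m from by omega),
            hwmid j (by omega) (by omega), hκmid j (by omega) (by omega),
            hwlast (j+1) (by omega), hκlast' (j+1) (by omega)]
          ring
    rw [heq]
    exact hterm_le _
  have hBw0 : Bw 0 = 0 := by
    simp only [hBwdef]
    rw [hw0, hκ0', hB2]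
    ring
  have hAwlast : Aw (m+1) = 0 := by
    simp only [hAwdef]
    rw [hwlast (m+1) (by omega), hκlast' (m+1) (by omega), hA1]
    ring
  have hL0 : 0 ≤ L := by
    have h := hterm 0 (Nat.zero_le m)
    have h1 := (hAw02 0).1
    have h2 := (hBw02 1).1
    linarith
  have hAw_le : ∀ j, j ≤ m + 1 → Aw j ≤ L := by
    intro j hj
    rcases Nat.lt_or_ge j (m+1) with h | h
    · have := hterm j (by omega)
      have := (hBw02 (j+1)).1
      linarith
    · have hj' : j = m + 1 := by omega
      subst hj'
      rw [hAwlast]; exact hL0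
  have hBw_le : ∀ j, j ≤ m + 1 → Bw j ≤ L := by
    intro j hj
    rcases Nat.eq_zero_or_pos j with rfl | hjpos
    · rw [hBw0]; exact hL0
    · have h1 := hterm (j-1) (by omega)
      have h2 := (hAw02 (j-1)).1
      have h3 : j - 1 + 1 = j := by omega
      rw [h3] at h1
      linarith
  -- injectivity of κ on [0, m+1]
  have hκ0 : (κ 0 : ℕ) = 1 := by rw [hκ0']
  have hκlast : (κ (m+1) : ℕ) = 0 := by rw [hκlast' (m+1) (by omega)]
  have hκmid2 : ∀ j, 1 ≤ j → j ≤ m → 2 ≤ (κ j : ℕ) := by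
    intro j h1 h2
    rw [hκmid j h1 h2]
    exact hge2 _
  have hκinj : ∀ j j', j ≤ m+1 → j' ≤ m+1 → κ j = κ j' → j = j' := by
    intro j j' hj hj' heq
    by_contra hne
    have hval : (κ j : ℕ) = (κ j' : ℕ) := by rw [heq]
    have key : ∀ i, i ≤ m + 1 → ((i = 0 ∧ (κ i : ℕ) = 1) ∨
        (1 ≤ i ∧ i ≤ m ∧ 2 ≤ (κ i : ℕ)) ∨ (i = m+1 ∧ (κ i : ℕ) = 0)) := by
      intro i hi
      rcases Nat.eq_zero_or_pos i with rfl | hip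
      · exact Or.inl ⟨rfl, hκ0⟩
      · rcases Nat.lt_or_ge i (m+1) with h | h
        · exact Or.inr (Or.inl ⟨hip, by omega, hκmid2 i hip (by omega)⟩)
        · have : i = m+1 := by omega
          subst this
          exact Or.inr (Or.inr ⟨rfl, hκlast⟩)
    rcases key j hj with ⟨e1, v1⟩ | ⟨e1, e2, v1⟩ | ⟨e1, v1⟩ <;>
      rcases key j' hj' with ⟨f1, v2⟩ | ⟨f1, f2, v2⟩ | ⟨f1, v2⟩ <;>
      try omega
    -- both middle
    have heq2 : c ⟨j-1, by omega⟩ = c ⟨j'-1, by omega⟩ := by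
      rw [← hκmid j e1 e2, ← hκmid j' f1 f2, heq]
    have := hinj heq2
    have hval2 : j - 1 = j' - 1 := by
      simpa using congrArg Fin.val this
    omega
  -- non-chain coordinates
  have hnotchain : ∀ i : Fin n, (∀ j, j ≤ m+1 → κ j ≠ i) → |A i - B i| ≤ L := by
    intro i hi
    have h0 : (i:ℕ) ≠ 1 := by
      intro h
      exact hi 0 (by omega) (Fin.ext (by omega))
    have h1 : (i:ℕ) ≠ 0 := by
      intro h
      exact hi (m+1) le_rfl (Fin.ext (by omega))
    have h2 : ∀ t : Fin m, c t ≠ i := by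
      intro t ht
      refine hi ((t:ℕ)+1) (by have := t.isLt; omega) ?_
      rw [hκmid ((t:ℕ)+1) (by omega) (by have := t.isLt; omega), ← ht]
      exact congrArg c (Fin.ext (by simp))
    exact hdrift_le i (by omega) h2
  -- the path, coordinatewise
  set φ : Fin n → ℝ → ℝ := fun i s =>
    if h : ∃ j, j ≤ m + 1 ∧ κ j = i ∧ Aw j ≤ L - Bw j then
      w h.choose * (1 - max 0 (max (Aw h.choose - s) (s - (L - Bw h.choose))))
    else max (A i - s) (min (A i + s) (B i)) with hφdef
  have hlip : ∀ i s s', |φ i s - φ i s'| ≤ |s - s'| := by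
    intro i s s'
    simp only [hφdef]
    split_ifs with h
    · set j := h.choose with hj
      rw [← mul_sub, abs_mul, habsw, one_mul]
      have e : (1 - max 0 (max (Aw j - s) (s - (L - Bw j)))) -
          (1 - max 0 (max (Aw j - s') (s' - (L - Bw j)))) =
          -(max 0 (max (Aw j - s) (s - (L - Bw j))) -
            max 0 (max (Aw j - s') (s' - (L - Bw j)))) := by ring
      rw [e, abs_neg]
      refine le_trans (abs_max_sub_max_le_max _ _ _ _) (max_le ?_ ?_)
      · rw [sub_self, abs_zero]; exact abs_nonneg _
      · refine le_trans (abs_max_sub_max_le_max _ _ _ _) (max_le ?_ ?_)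
        · rw [show Aw j - s - (Aw j - s') = -(s - s') by ring, abs_neg]
        · rw [show s - (L - Bw j) - (s' - (L - Bw j)) = s - s' by ring]
    · refine le_trans (abs_max_sub_max_le_max _ _ _ _) (max_le ?_ ?_)
      · rw [show A i - s - (A i - s') = -(s - s') by ring, abs_neg]
      · refine le_trans (abs_min_sub_min_le_max _ _ _ _) (max_le ?_ ?_)
        · rw [show A i + s - (A i + s') = s - s' by ring]
        · rw [sub_self, abs_zero]; exact abs_nonneg _
  have hstart : ∀ i, φ i 0 = A i := by
    intro i
    simp only [hφdef]
    split_ifs with h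
    · obtain ⟨hj1, hj2, hj3⟩ := h.choose_spec
      set j := h.choose with hj
      have h0 := (hAw02 j).1
      have e : max 0 (max (Aw j - 0) (0 - (L - Bw j))) = Aw j := by
        rw [sub_zero, zero_sub, max_eq_left (by linarith : -(L - Bw j) ≤ Aw j),
          max_eq_right h0]
      rw [e, ← hj2]
      simp only [hAwdef]
      linear_combination A (κ j) * hsq j
    · rcases le_total (A i) (B i) with hab | hab
      · rw [sub_zero, add_zero, min_eq_left hab, max_self]
      · rw [sub_zero, add_zero, min_eq_right hab, max_eq_left hab]
  have habs_nc : ∀ i, ¬ (∃ j, j ≤ m + 1 ∧ κ j = i ∧ Aw j ≤ L - Bw j) → |A i - B i| ≤ L := by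
    intro i hni
    by_cases hk : ∃ j, j ≤ m+1 ∧ κ j = i
    · obtain ⟨j, hj1, hj2⟩ := hk
      subst hj2
      have e : A (κ j) - B (κ j) = w j * (Bw j - Aw j) := by
        simp only [hAwdef, hBwdef]
        linear_combination (B (κ j) - A (κ j)) * hsq j
      rw [e, abs_mul, habsw, one_mul, abs_le]
      have h1 := hAw_le j hj1
      have h2 := hBw_le j hj1
      have h3 := (hAw02 j).1
      have h4 := (hBw02 j).1
      constructor <;> linarith
    · push_neg at hk
      exact hnotchain _ (fun j hj => hk j hj)
  have hend : ∀ i, φ i L = B i := by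
    intro i
    simp only [hφdef]
    split_ifs with h
    · obtain ⟨hj1, hj2, hj3⟩ := h.choose_spec
      set j := h.choose with hj
      have h0 := (hBw02 j).1
      have hAwj := (hAw02 j).1
      have e : max 0 (max (Aw j - L) (L - (L - Bw j))) = Bw j := by
        have e2 : L - (L - Bw j) = Bw j := by ring
        rw [e2, max_eq_right (by linarith : Aw j - L ≤ Bw j), max_eq_right h0]
      rw [e, ← hj2]
      simp only [hBwdef]
      linear_combination B (κ j) * hsq j
    · have habs := habs_nc i h
      rw [abs_le] at habs
      have e1 : A i - L ≤ B i := by linarith [habs.1]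
      have e2 : B i ≤ A i + L := by linarith [habs.2]
      rw [min_eq_right e2, max_eq_right e1]
  have hbnd : ∀ i s, 0 ≤ s → s ≤ L → |φ i s| ≤ 1 := by
    intro i s hs0 hsL
    simp only [hφdef]
    split_ifs with h
    · set j := h.choose with hj
      rw [abs_mul, habsw, one_mul, abs_le]
      have h1 := (hAw02 j).1; have h2 := (hAw02 j).2
      have h3 := (hBw02 j).1; have h4 := (hBw02 j).2
      have hM0 : 0 ≤ max 0 (max (Aw j - s) (s - (L - Bw j))) := le_max_left _ _
      have hM2 : max 0 (max (Aw j - s) (s - (L - Bw j))) ≤ 2 :=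
        max_le (by norm_num) (max_le (by linarith) (by linarith))
      constructor <;> linarith
    · have h1 := (hA i).1; have h2 := (hA i).2
      have h3 := (hB i).1; have h4 := (hB i).2
      rw [abs_le]
      constructor
      · have : min (A i + s) (B i) ≥ -1 := le_min (by linarith) (by linarith)
        have := le_max_right (A i - s) (min (A i + s) (B i))
        linarith
      · exact max_le (by linarith) (le_trans (min_le_right _ _) h4)
  have hcov : ∀ s, 0 ≤ s → s ≤ L → ∃ j, j ≤ m+1 ∧ Aw j ≤ s ∧ s ≤ L - Bw j := by
    intro s hs0 hsL
    by_contra hcon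
    push_neg at hcon
    have hex : ∃ j, j ≤ m+1 ∧ Aw j ≤ s := ⟨m+1, le_rfl, by rw [hAwlast]; exact hs0⟩
    obtain ⟨j₀, ⟨hj₀1, hj₀2⟩, hmin⟩ := nat_min_exists hex
    have hcon₀ := hcon j₀ hj₀1 hj₀2
    rcases Nat.eq_zero_or_pos j₀ with hj₀z | hj₀p
    · rw [hj₀z, hBw0] at hcon₀
      linarith
    · have hminp := hmin (j₀ - 1) (by omega)
      push_neg at hminp
      have hAwp : s < Aw (j₀ - 1) := hminp (by omega)
      have ht := hterm (j₀ - 1) (by omega)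
      have h3 : j₀ - 1 + 1 = j₀ := by omega
      rw [h3] at ht
      linarith
  have hsphere : ∀ s, 0 ≤ s → s ≤ L → ∃ i, |φ i s| = 1 := by
    intro s hs0 hsL
    obtain ⟨j, hj1, hj2, hj3⟩ := hcov s hs0 hsL
    refine ⟨κ j, ?_⟩
    simp only [hφdef]
    have hWex : ∃ j', j' ≤ m+1 ∧ κ j' = κ j ∧ Aw j' ≤ L - Bw j' :=
      ⟨j, hj1, rfl, le_trans hj2 hj3⟩
    rw [dif_pos hWex]
    obtain ⟨hc1, hc2, hc3⟩ := hWex.choose_spec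
    have hjj : hWex.choose = j := hκinj _ _ hc1 hj1 hc2
    rw [hjj]
    have e : max 0 (max (Aw j - s) (s - (L - Bw j))) = 0 :=
      max_eq_left (max_le (by linarith) (by linarith))
    rw [e]
    simpa using habsw j
  -- the path
  set g : ℝ → Fin n → ℝ := fun t i => φ i (L * t) with hgdef
  have hg0 : g 0 = A := by
    funext i
    simp only [hgdef, mul_zero]
    exact hstart i
  have hg1 : g 1 = B := by
    funext i
    simp only [hgdef, mul_one]
    exact hend i
  have hsL : ∀ t : ℝ, t ∈ Icc (0:ℝ) 1 → 0 ≤ L * t ∧ L * t ≤ L := by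
    intro t ht
    constructor
    · exact mul_nonneg hL0 ht.1
    · nlinarith [ht.2, hL0]
  have hgsph : ∀ t ∈ Icc (0:ℝ) 1, ‖g t‖ = 1 := by
    intro t ht
    obtain ⟨hs1, hs2⟩ := hsL t ht
    obtain ⟨i₀, hi₀⟩ := hsphere (L * t) hs1 hs2
    exact norm_eq_one_of (g t) (fun i => hbnd i (L * t) hs1 hs2) i₀ hi₀
  have hgcont : ContinuousOn g (Icc 0 1) := by
    rw [continuousOn_pi]
    intro i
    have hlipi : LipschitzWith 1 (φ i) := by
      apply LipschitzWith.of_dist_le_mul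
      intro a b
      rw [Real.dist_eq, Real.dist_eq, NNReal.coe_one, one_mul]
      exact hlip i a b
    exact ((hlipi.continuous).comp (continuous_const.mul continuous_id)).continuousOn
  have hgvar : eVariationOn g (Icc 0 1) ≤ ENNReal.ofReal L := by
    apply evar_le_of_lip g hL0
    intro s hs t ht hst i
    calc |g t i - g s i| = |φ i (L * t) - φ i (L * s)| := rfl
      _ ≤ |L * t - L * s| := hlip i _ _
      _ = L * (t - s) := by
          rw [show L * t - L * s = L * (t - s) by ring,
            abs_of_nonneg (mul_nonneg hL0 (by linarith))]
  have hfinal : geoDist A B ≤ eVariationOn g (Icc 0 1) := by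
    unfold geoDist
    exact iInf_le_of_le g (iInf_le_of_le hgcont (iInf_le_of_le hg0
      (iInf_le_of_le hg1 (iInf_le_of_le hgsph le_rfl))))
  exact le_trans hfinal hgvar

/-! ### The lower bound -/

set_option maxHeartbeats 2000000 in
theorem lower {n : ℕ} (hn : 3 ≤ n) (A B : Fin n → ℝ)
    (hA1 : A ⟨0, by linarith⟩ = 1) (hB2 : B ⟨1, by linarith⟩ = 1)
    (hA : ∀ i, A i ∈ Icc (-1:ℝ) 1) (hB : ∀ i, B i ∈ Icc (-1:ℝ) 1)
    (hQbdd : BddBelow {q : ℝ |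
        ∃ (m : ℕ) (c : Fin m → Fin n) (ε : Fin m → ℝ),
          m ≤ n - 2 ∧ Function.Injective c ∧ (∀ t, 2 ≤ ((c t : ℕ))) ∧
          (∀ t, ε t = 1 ∨ ε t = -1) ∧ q = candidateLength hn A B c ε})
    (γ : ℝ → (Fin n → ℝ)) (hγc : ContinuousOn γ (Icc 0 1)) (hγ0 : γ 0 = A)
    (hγ1 : γ 1 = B) (hγs : ∀ t ∈ Icc (0:ℝ) 1, ‖γ t‖ = 1) :
    ENNReal.ofReal (sInf {q : ℝ |
        ∃ (m : ℕ) (c : Fin m → Fin n) (ε : Fin m → ℝ),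
          m ≤ n - 2 ∧ Function.Injective c ∧ (∀ t, 2 ≤ ((c t : ℕ))) ∧
          (∀ t, ε t = 1 ∨ ε t = -1) ∧ q = candidateLength hn A B c ε}) ≤
      eVariationOn γ (Icc 0 1) := by
  classical
  set Q := {q : ℝ |
        ∃ (m : ℕ) (c : Fin m → Fin n) (ε : Fin m → ℝ),
          m ≤ n - 2 ∧ Function.Injective c ∧ (∀ t, 2 ≤ ((c t : ℕ))) ∧
          (∀ t, ε t = 1 ∨ ε t = -1) ∧ q = candidateLength hn A B c ε} with hQdef
  by_cases hfin : eVariationOn γ (Icc 0 1) = ⊤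
  · rw [hfin]; exact le_top
  set V : ℝ := (eVariationOn γ (Icc 0 1)).toReal with hVdef
  suffices h : sInf Q ≤ V by
    calc ENNReal.ofReal (sInf Q) ≤ ENNReal.ofReal V := ENNReal.ofReal_le_ofReal h
      _ = eVariationOn γ (Icc 0 1) := ENNReal.ofReal_toReal hfin
  -- basic variation facts
  set vv : ℝ → ℝ := fun s => (eVariationOn γ (Icc 0 s)).toReal with hvvdef
  have hfinsub : ∀ x y : ℝ, 0 ≤ x → y ≤ 1 → eVariationOn γ (Icc x y) ≠ ⊤ :=
    fun x y hx hy => ne_top_of_le_ne_top hfin (eVariationOn.mono γ (Icc_subset_Icc hx hy))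
  have hadd : ∀ x y : ℝ, 0 ≤ x → x ≤ y → y ≤ 1 →
      vv x + (eVariationOn γ (Icc x y)).toReal = vv y := by
    intro x y hx hxy hy
    have h := eVariationOn.Icc_add_Icc (f := γ) (s := (univ : Set ℝ)) hx hxy (mem_univ x)
    simp only [univ_inter] at h
    simp only [hvvdef]
    rw [← h, ENNReal.toReal_add (hfinsub 0 x le_rfl (by linarith)) (hfinsub x y hx hy)]
  have hvv0 : vv 0 = 0 := by
    simp only [hvvdef, Icc_self]
    rw [eVariationOn.subsingleton γ subsingleton_singleton]
    rfl
  have hvv1 : vv 1 = V := rfl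
  have hvmono : ∀ x y : ℝ, 0 ≤ x → x ≤ y → y ≤ 1 → vv x ≤ vv y := by
    intro x y hx hxy hy
    have := hadd x y hx hxy hy
    have h2 : 0 ≤ (eVariationOn γ (Icc x y)).toReal := ENNReal.toReal_nonneg
    linarith
  have hvpos : ∀ x : ℝ, 0 ≤ x → x ≤ 1 → 0 ≤ vv x := fun x hx hy =>
    le_trans (le_of_eq hvv0.symm) (hvmono 0 x le_rfl hx hy)
  have hV0 : 0 ≤ V := ENNReal.toReal_nonneg
  -- coordinate bound
  have hcb : ∀ (i : Fin n) (x y : ℝ), 0 ≤ x → x ≤ y → y ≤ 1 →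
      |γ y i - γ x i| ≤ vv y - vv x := by
    intro i x y hx hxy hy
    have h1 := coord_abs_le γ i hxy (hfinsub x y hx hy)
    have h2 := hadd x y hx hxy hy
    linarith
  have ha2 := hA ⟨1, by omega⟩
  have hb1 := hB ⟨0, by omega⟩
  have h1a2 : 1 - A ⟨1, by omega⟩ ≤ V := by
    have := hcb ⟨1, by omega⟩ 0 1 le_rfl zero_le_one le_rfl
    rw [hγ0, hγ1, hvv1, hvv0, hB2] at this
    calc 1 - A ⟨1, by omega⟩ = |1 - A ⟨1, by omega⟩| := (abs_of_nonneg (by linarith [ha2.2])).symm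
      _ ≤ V - 0 := this
      _ = V := by ring
  have h1b1 : 1 - B ⟨0, by omega⟩ ≤ V := by
    have := hcb ⟨0, by omega⟩ 0 1 le_rfl zero_le_one le_rfl
    rw [hγ0, hγ1, hvv1, hvv0, hA1] at this
    calc 1 - B ⟨0, by omega⟩ = |B ⟨0, by omega⟩ - 1| := by
          rw [abs_of_nonpos (by linarith [hb1.2])]; ring
      _ ≤ V - 0 := this
      _ = V := by ring
  have hdriftV : ∀ p : Fin n, |A p - B p| ≤ V := by
    intro p
    have := hcb p 0 1 le_rfl zero_le_one le_rfl
    rw [hγ0, hγ1, hvv1, hvv0, abs_sub_comm] at this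
    linarith
  -- the m = 0 candidate
  have hq0mem : candidateLength hn A B (fun t : Fin 0 => t.elim0) (fun t : Fin 0 => t.elim0) ∈ Q := by
    rw [hQdef]
    exact ⟨0, _, _, by omega, fun a b _ => Subsingleton.elim a b, fun t => t.elim0,
      fun t => t.elim0, rfl⟩
  -- ε-argument
  refine le_of_forall_pos_le_add ?_
  intro ε hε
  set ε4 : ℝ := ε / 4 with hε4def
  have hε4 : 0 < ε4 := by rw [hε4def]; linarith
  -- the two thresholds
  set Sσ : Set ℝ := {s | s ∈ Icc (0:ℝ) 1 ∧ 1 - A ⟨1, by omega⟩ ≤ vv s} with hSσdef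
  have hSσne : Sσ.Nonempty := ⟨1, ⟨zero_le_one, le_rfl⟩, by rw [hvv1]; exact h1a2⟩
  have hSσbdd : BddBelow Sσ := ⟨0, fun s hs => hs.1.1⟩
  set σ : ℝ := sInf Sσ with hσdef
  have hσ0 : 0 ≤ σ := le_csInf hSσne (fun s hs => hs.1.1)
  have hσ1 : σ ≤ 1 := csInf_le hSσbdd ⟨⟨zero_le_one, le_rfl⟩, by rw [hvv1]; exact h1a2⟩
  have hσlt : ∀ s, 0 ≤ s → s < σ → vv s < 1 - A ⟨1, by omega⟩ := by
    intro s hs0 hsσ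
    by_contra hcon
    push_neg at hcon
    exact absurd (csInf_le hSσbdd ⟨⟨hs0, by linarith⟩, hcon⟩) (by linarith)
  have hσmem2 : ∀ s, σ < s → s ≤ 1 → 1 - A ⟨1, by omega⟩ ≤ vv s := by
    intro s hσs hs1
    obtain ⟨y, hy, hys⟩ := exists_lt_of_csInf_lt hSσne hσs
    exact le_trans hy.2 (hvmono y s hy.1.1 hys.le hs1)
  have hFact1 : 1 - A ⟨1, by omega⟩ ≤ vv σ + ε4 := by
    rcases eq_or_lt_of_le hσ1 with h | h
    · rw [h, hvv1]; linarith
    · obtain ⟨y, hy1, hy2, hy3⟩ := evar_right_cont hγc hfin hσ0 h hε4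
      have hsm : (eVariationOn γ (Icc σ y)).toReal ≤ ε4 := by
        have := ENNReal.toReal_mono (by simp) hy3
        rwa [ENNReal.toReal_ofReal hε4.le] at this
      have := hadd σ y hσ0 hy1.le hy2
      have h2 := hσmem2 y hy1 hy2
      linarith
  set Sτ : Set ℝ := {s | s ∈ Icc (0:ℝ) 1 ∧ 1 - B ⟨0, by omega⟩ ≤ V - vv s} with hSτdef
  have hSτne : Sτ.Nonempty := ⟨0, ⟨le_rfl, zero_le_one⟩, by rw [hvv0]; linarith⟩
  have hSτbdd : BddAbove Sτ := ⟨1, fun s hs => hs.1.2⟩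
  set τ : ℝ := sSup Sτ with hτdef
  have hτ0 : 0 ≤ τ := le_csSup hSτbdd ⟨⟨le_rfl, zero_le_one⟩, by rw [hvv0]; linarith⟩
  have hτ1 : τ ≤ 1 := csSup_le hSτne (fun s hs => hs.1.2)
  have hτgt : ∀ s, τ < s → s ≤ 1 → V - vv s < 1 - B ⟨0, by omega⟩ := by
    intro s hτs hs1
    by_contra hcon
    push_neg at hcon
    exact absurd (le_csSup hSτbdd ⟨⟨by linarith, hs1⟩, hcon⟩) (by linarith)
  have hτmem2 : ∀ s, 0 ≤ s → s < τ → 1 - B ⟨0, by omega⟩ ≤ V - vv s := by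
    intro s hs0 hsτ
    obtain ⟨y, hy, hys⟩ := exists_lt_of_lt_csSup hSτne hsτ
    have := hvmono s y hs0 hys.le hy.1.2
    linarith [hy.2]
  have hFact2 : 1 - B ⟨0, by omega⟩ ≤ V - vv τ + ε4 := by
    rcases eq_or_lt_of_le hτ0 with h | h
    · rw [← h, hvv0]; linarith
    · obtain ⟨y, hy1, hy2, hy3⟩ := evar_left_cont hγc hfin h hτ1 hε4
      have hsm : (eVariationOn γ (Icc y τ)).toReal ≤ ε4 := by
        have := ENNReal.toReal_mono (by simp) hy3
        rwa [ENNReal.toReal_ofReal hε4.le] at this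
      have := hadd y τ hy1 hy2.le hτ1
      have h2 := hτmem2 y hy1 hy2
      linarith
  rcases le_total σ τ with hστ | hτσ
  · -- m = 0 candidate suffices
    refine le_trans (csInf_le hQbdd hq0mem) ?_
    unfold candidateLength
    apply Real.sSup_le
    · rintro q (⟨t, rfl⟩ | ⟨p, -, -, rfl⟩)
      · rcases t with ⟨j, hj⟩
        have hj0 : j = 0 := by omega
        subst hj0
        rw [chainTerm_eval hn A B _ _ 0 hj, dif_pos rfl, dif_pos rfl]
        have hσle : vv σ ≤ vv τ := hvmono σ τ hσ0 hστ hτ1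
        have := hFact1
        have := hFact2
        rw [hε4def] at *
        linarith
      · have := hdriftV p
        linarith
    · linarith
  · -- chain case
    rcases lt_or_eq_of_le hτσ with hτσlt | hτσeq
    · -- chain case
      have hσpos : 0 < σ := lt_of_le_of_lt hτ0 hτσlt
      have hτlt1 : τ < 1 := lt_of_lt_of_le hτσlt hσ1
      obtain ⟨ya, hya0, hyaσ, hya3⟩ := evar_left_cont hγc hfin hσpos hσ1 hε4
      obtain ⟨yb, hybτ, hyb1, hyb3⟩ := evar_right_cont hγc hfin hτ0 hτlt1 hε4
      have hsma : (eVariationOn γ (Icc ya σ)).toReal ≤ ε4 := by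
        have := ENNReal.toReal_mono (by simp) hya3
        rwa [ENNReal.toReal_ofReal hε4.le] at this
      have hsmb : (eVariationOn γ (Icc τ yb)).toReal ≤ ε4 := by
        have := ENNReal.toReal_mono (by simp) hyb3
        rwa [ENNReal.toReal_ofReal hε4.le] at this
      set r : ℝ := max ya ((τ + σ)/2) with hrdef
      set l : ℝ := min yb ((τ + σ)/2) with hldef
      have hlr : l ≤ r := le_trans (min_le_right _ _) (le_max_right _ _)
      have hτl : τ < l := lt_min hybτ (by linarith)
      have hrσ : r < σ := max_lt hyaσ (by linarith)
      have hl0 : 0 ≤ l := le_trans hτ0 hτl.le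
      have hr1 : r ≤ 1 := le_trans hrσ.le hσ1
      have hvl : vv l ≤ vv τ + ε4 := by
        have h1 : vv l ≤ vv yb := hvmono l yb hl0 (min_le_left _ _) hyb1
        have h2 := hadd τ yb hτ0 hybτ.le hyb1
        linarith
      have hvr : vv σ - ε4 ≤ vv r := by
        have h1 : vv ya ≤ vv r := hvmono ya r hya0 (le_max_left _ _) hr1
        have h2 := hadd ya σ hya0 hyaσ.le hσ1
        linarith
      have hgapA : ∀ s, l ≤ s → s ≤ r → vv s < 1 - A ⟨1, by omega⟩ :=
        fun s hls hsr => hσlt s (le_trans hl0 hls) (lt_of_le_of_lt hsr hrσ)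
      have hgapB : ∀ s, l ≤ s → s ≤ r → V - vv s < 1 - B ⟨0, by omega⟩ :=
        fun s hls hsr => hτgt s (lt_of_lt_of_le hτl hls) (le_trans hsr hr1)
      -- the closed cover by face sets
      set val : Bool → ℝ := fun b => if b then 1 else -1 with hvaldef
      have hvalpm : ∀ b, val b = 1 ∨ val b = -1 := by
        intro b; cases b
        · right; rfl
        · left; rfl
      set S : Fin n × Bool → Set ℝ :=
        fun p => {s | s ∈ Icc l r ∧ γ s p.1 = val p.2} with hSdef
      have hScl : ∀ p, IsClosed (S p) := by
        intro p
        have hcont : ContinuousOn (fun s => γ s p.1) (Icc l r) :=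
          ((continuousOn_pi.1 hγc) p.1).mono (Icc_subset_Icc hl0 hr1)
        have he : S p = Icc l r ∩ (fun s => γ s p.1) ⁻¹' {val p.2} := by
          ext s
          simp only [hSdef, mem_setOf_eq, mem_inter_iff, mem_preimage, mem_singleton_iff]
        rw [he]
        exact hcont.preimage_isClosed_of_isClosed isClosed_Icc isClosed_singleton
      have hSsub : ∀ p, S p ⊆ Icc l r := fun p s hs => hs.1
      have hSbddB : ∀ p, BddBelow (S p) := fun p => ⟨l, fun s hs => (hSsub _ hs).1⟩
      have hSbddA : ∀ p, BddAbove (S p) := fun p => ⟨r, fun s hs => (hSsub _ hs).2⟩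
      have hScov : ∀ x ∈ Icc l r, ∃ p, x ∈ S p := by
        intro x hx
        have hx01 : x ∈ Icc (0:ℝ) 1 := ⟨le_trans hl0 hx.1, le_trans hx.2 hr1⟩
        obtain ⟨i, hi⟩ := exists_abs_eq_one (by omega) (γ x) (hγs x hx01)
        rcases (abs_eq (le_of_lt one_pos)).1 hi with h | h
        · exact ⟨(i, true), hx, h⟩
        · exact ⟨(i, false), hx, h⟩
      obtain ⟨m', e, hP1, hP2, hP3, hP4, hP5⟩ := chain_cover S hScl hlr hSsub hScov
      have hmemInf : ∀ j, j ≤ m' → sInf (S (e j)) ∈ S (e j) :=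
        fun j hj => (hScl (e j)).csInf_mem (hP5 j hj) (hSbddB _)
      have hmemSup : ∀ j, j ≤ m' → sSup (S (e j)) ∈ S (e j) :=
        fun j hj => (hScl (e j)).csSup_mem (hP5 j hj) (hSbddA _)
      -- no coordinate 0 or 1 in the gap
      have hclean : ∀ j, j ≤ m' → 2 ≤ ((e j).1 : ℕ) := by
        intro j hj
        obtain ⟨s₀, hs₀m, hs₀v⟩ := hP5 j hj
        have hs0 : 0 ≤ s₀ := le_trans hl0 hs₀m.1
        have hs1 : s₀ ≤ 1 := le_trans hs₀m.2 hr1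
        have hgA := hgapA s₀ hs₀m.1 hs₀m.2
        have hgB := hgapB s₀ hs₀m.1 hs₀m.2
        by_contra hcon
        push_neg at hcon
        have hcases : (e j).1 = (⟨0, by omega⟩ : Fin n) ∨ (e j).1 = (⟨1, by omega⟩ : Fin n) := by
          rcases (by omega : ((e j).1 : ℕ) = 0 ∨ ((e j).1 : ℕ) = 1) with h | h
          · exact Or.inl (Fin.ext h)
          · exact Or.inr (Fin.ext h)
        rcases hcases with h | h <;> rcases hvalpm (e j).2 with hv | hv
        · -- coord 0, value 1
          rw [h, hv] at hs₀v
          have hb := hcb ⟨0, by omega⟩ s₀ 1 hs0 hs1 le_rfl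
          rw [hγ1, hs₀v, hvv1] at hb
          have habs : |B ⟨0, by omega⟩ - 1| = 1 - B ⟨0, by omega⟩ := by
            rw [abs_of_nonpos (by linarith [hb1.2])]; ring
          rw [habs] at hb
          linarith
        · -- coord 0, value -1
          rw [h, hv] at hs₀v
          have hb := hcb ⟨0, by omega⟩ 0 s₀ le_rfl hs0 hs1
          rw [hγ0, hs₀v, hA1, hvv0] at hb
          have habs : |(-1 : ℝ) - 1| = 2 := by norm_num
          rw [habs] at hb
          linarith [ha2.1]
        · -- coord 1, value 1
          rw [h, hv] at hs₀v
          have hb := hcb ⟨1, by omega⟩ 0 s₀ le_rfl hs0 hs1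
          rw [hγ0, hs₀v, hvv0] at hb
          have habs : |1 - A ⟨1, by omega⟩| = 1 - A ⟨1, by omega⟩ :=
            abs_of_nonneg (by linarith [ha2.2])
          rw [habs] at hb
          linarith
        · -- coord 1, value -1
          rw [h, hv] at hs₀v
          have hb := hcb ⟨1, by omega⟩ s₀ 1 hs0 hs1 le_rfl
          rw [hγ1, hs₀v, hB2] at hb
          have habs : |(1:ℝ) - -1| = 2 := by norm_num
          rw [habs, hvv1] at hb
          linarith [hb1.1]
      -- one sign per coordinate in the gap
      have hsign : ∀ j k, j ≤ m' → k ≤ m' → (e j).1 = (e k).1 → (e j).2 = (e k).2 := by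
        intro j k hj hk hco
        by_contra hb
        obtain ⟨s₁, hs₁m, hs₁v⟩ := hP5 j hj
        obtain ⟨s₂, hs₂m, hs₂v⟩ := hP5 k hk
        rw [← hco] at hs₂v
        have hdiff : |γ s₁ ((e j).1) - γ s₂ ((e j).1)| = 2 := by
          rw [hs₁v, hs₂v]
          cases hj2 : (e j).2 <;> cases hk2 : (e k).2
          · exact absurd (hj2.trans hk2.symm) hb
          · simp only [hvaldef]
            norm_num
          · simp only [hvaldef]
            norm_num
          · exact absurd (hj2.trans hk2.symm) hb
        have hs10 : 0 ≤ s₁ := le_trans hl0 hs₁m.1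
        have hs11 : s₁ ≤ 1 := le_trans hs₁m.2 hr1
        have hs20 : 0 ≤ s₂ := le_trans hl0 hs₂m.1
        have hs21 : s₂ ≤ 1 := le_trans hs₂m.2 hr1
        have h2A : 1 - A ⟨1, by omega⟩ ≤ 2 := by linarith [ha2.1]
        rcases le_total s₁ s₂ with hss | hss
        · have hb2 := hcb ((e j).1) s₁ s₂ hs10 hss hs21
          rw [abs_sub_comm] at hb2
          rw [hdiff] at hb2
          have := hgapA s₂ hs₂m.1 hs₂m.2
          have := hvpos s₁ hs10 hs11
          linarith
        · have hb2 := hcb ((e j).1) s₂ s₁ hs20 hss hs11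
          rw [hdiff] at hb2
          have := hgapA s₁ hs₁m.1 hs₁m.2
          have := hvpos s₂ hs20 hs21
          linarith
      -- the candidate
      set mm := m' + 1 with hmmdef
      set cc : Fin mm → Fin n := fun t => (e (t : ℕ)).1 with hccdef
      set εε : Fin mm → ℝ := fun t => -val (e (t : ℕ)).2 with hεεdef
      have hstrict := strict_of_consec (fun j => sInf (S (e j))) hP3
      have hccinj : Function.Injective cc := by
        intro t t' h
        simp only [hccdef] at h
        by_contra hne
        have hne' : (t : ℕ) ≠ (t' : ℕ) := fun hc => hne (Fin.ext hc)
        have hsg := hsign (t : ℕ) (t' : ℕ) (by have := t.isLt; omega)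
          (by have := t'.isLt; omega) h
        have hee : e (t : ℕ) = e (t' : ℕ) := Prod.ext h hsg
        rcases Nat.lt_or_ge (t : ℕ) (t' : ℕ) with hlt | hge
        · have h1 := hstrict _ _ hlt (by have := t'.isLt; omega)
          simp only [hee] at h1
          exact absurd h1 (lt_irrefl _)
        · have hlt' : (t' : ℕ) < (t : ℕ) := by omega
          have h1 := hstrict _ _ hlt' (by have := t.isLt; omega)
          simp only [hee] at h1
          exact absurd h1 (lt_irrefl _)
      have hcc2 : ∀ t, 2 ≤ ((cc t : ℕ)) := fun t => hclean _ (by have := t.isLt; omega)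
      have hεεpm : ∀ t, εε t = 1 ∨ εε t = -1 := by
        intro t
        rcases hvalpm (e (t : ℕ)).2 with h | h <;> simp only [hεεdef, h]
        · right; norm_num
        · left; norm_num
      have hmm2 : mm ≤ n - 2 := by
        have hinj2 : Function.Injective (fun t : Fin mm => (⟨(cc t : ℕ) - 2, by
            have := (cc t).isLt; have := hcc2 t; omega⟩ : Fin (n-2))) := by
          intro t t' h
          apply hccinj
          have hval2 := congrArg Fin.val h
          simp only at hval2
          have h2 := hcc2 t; have h2' := hcc2 t'
          exact Fin.ext (by omega)
        have := Fintype.card_le_of_injective _ hinj2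
        simpa using this
      -- element bounds
      have hAbound : ∀ k, k ≤ m' → 1 - val (e k).2 * A ((e k).1) ≤ vv (sInf (S (e k))) := by
        intro k hk
        obtain ⟨hm1, hm2⟩ := hmemInf k hk
        have h0 : 0 ≤ sInf (S (e k)) := le_trans hl0 hm1.1
        have h1 : sInf (S (e k)) ≤ 1 := le_trans hm1.2 hr1
        have hb := hcb (e k).1 0 (sInf (S (e k))) le_rfl h0 h1
        rw [hγ0, hm2, hvv0] at hb
        have habs := sign_abs (hvalpm (e k).2) (hA (e k).1)
        calc 1 - val (e k).2 * A ((e k).1) = |val (e k).2 - A ((e k).1)| := habs.symm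
          _ ≤ vv (sInf (S (e k))) - 0 := hb
          _ = vv (sInf (S (e k))) := by ring
      have hBbound : ∀ k, k ≤ m' → 1 - val (e k).2 * B ((e k).1) ≤ V - vv (sSup (S (e k))) := by
        intro k hk
        obtain ⟨hm1, hm2⟩ := hmemSup k hk
        have h0 : 0 ≤ sSup (S (e k)) := le_trans hl0 hm1.1
        have h1 : sSup (S (e k)) ≤ 1 := le_trans hm1.2 hr1
        have hb := hcb (e k).1 (sSup (S (e k))) 1 h0 h1 le_rfl
        rw [hγ1, hm2, hvv1, abs_sub_comm] at hb
        have habs := sign_abs (hvalpm (e k).2) (hB (e k).1)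
        calc 1 - val (e k).2 * B ((e k).1) = |val (e k).2 - B ((e k).1)| := habs.symm
          _ ≤ V - vv (sSup (S (e k))) := hb
      -- in-gap vv bounds
      have hvvInf : ∀ k, k ≤ m' → vv (sInf (S (e k))) ≤ vv (sSup (S (e k))) := by
        intro k hk
        have h1 := hmemInf k hk
        have h2 := hmemSup k hk
        exact hvmono _ _ (le_trans hl0 h1.1.1) (csInf_le_csSup (hP5 k hk) (hSbddB _) (hSbddA _))
          (le_trans h2.1.2 hr1)
      -- the first and last elements
      have hsup0 : vv σ - ε4 ≤ vv (sSup (S (e 0))) := by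
        have h1 : r ≤ sSup (S (e 0)) := le_csSup (hSbddA _) hP1
        have h2 := hmemSup 0 (Nat.zero_le _)
        have := hvmono r (sSup (S (e 0))) (le_trans hl0 hlr) h1 (le_trans h2.1.2 hr1)
        linarith
      have hinflast : vv (sInf (S (e m'))) ≤ vv τ + ε4 := by
        have h1 : sInf (S (e m')) ≤ l := hP4
        have h2 := hmemInf m' le_rfl
        have := hvmono (sInf (S (e m'))) l (le_trans hl0 h2.1.1) h1 (by linarith)
        linarith
      -- candidate membership and the final bound
      have hmem : candidateLength hn A B cc εε ∈ Q := by
        rw [hQdef]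
        exact ⟨mm, cc, εε, hmm2, hccinj, hcc2, hεεpm, rfl⟩
      refine le_trans (csInf_le hQbdd hmem) ?_
      unfold candidateLength
      apply Real.sSup_le
      · rintro q (⟨t, rfl⟩ | ⟨p, -, -, rfl⟩)
        · rcases t with ⟨j, hj⟩
          rw [chainTerm_eval hn A B cc εε j hj]
          by_cases hj0 : j = 0
          · subst hj0
            rw [dif_pos rfl, dif_neg (by omega : ¬ (0:ℕ) = mm)]
            simp only [hccdef, hεεdef]
            have hB0 := hBbound 0 (Nat.zero_le _)
            have := hFact1
            rw [hε4def] at *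
            linarith [hsup0]
          · by_cases hjm : j = mm
            · subst hjm
              rw [dif_neg hj0, dif_pos rfl]
              simp only [hccdef, hεεdef]
              have hA0 := hAbound (mm - 1) (by omega)
              have := hFact2
              have hml : mm - 1 = m' := by omega
              rw [hml] at hA0
              rw [hε4def] at *
              rw [hml]
              linarith [hinflast]
            · rw [dif_neg hj0, dif_neg hjm]
              simp only [hccdef, hεεdef]
              have hj1 : 1 ≤ j := by omega
              have hjm' : j ≤ m' := by omega
              have hAj := hAbound (j-1) (by omega)
              have hBj := hBbound j hjm'
              have hlink := hP2 (j-1) (by omega)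
              have hj11 : j - 1 + 1 = j := by omega
              rw [hj11] at hlink
              have hvlink := hvmono (sInf (S (e (j-1)))) (sSup (S (e j)))
                (le_trans hl0 (hmemInf (j-1) (by omega)).1.1) hlink
                (le_trans (hmemSup j hjm').1.2 hr1)
              linarith
        · have := hdriftV p
          linarith
      · linarith
    · -- σ = τ : m = 0 also works
      refine le_trans (csInf_le hQbdd hq0mem) ?_
      unfold candidateLength
      apply Real.sSup_le
      · rintro q (⟨t, rfl⟩ | ⟨p, -, -, rfl⟩)
        · rcases t with ⟨j, hj⟩
          have hj0 : j = 0 := by omega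
          subst hj0
          rw [chainTerm_eval hn A B _ _ 0 hj, dif_pos rfl, dif_pos rfl]
          rw [hτσeq] at hFact2
          rw [hε4def] at *
          linarith [hFact1, hFact2]
        · have := hdriftV p
          linarith
      · linarith

/-! ### Finiteness of the candidate set -/

theorem Qfinite {n : ℕ} (hn : 3 ≤ n) (A B : Fin n → ℝ) :
    Set.Finite {q : ℝ |
        ∃ (m : ℕ) (c : Fin m → Fin n) (ε : Fin m → ℝ),
          m ≤ n - 2 ∧ Function.Injective c ∧ (∀ t, 2 ≤ ((c t : ℕ))) ∧
          (∀ t, ε t = 1 ∨ ε t = -1) ∧ q = candidateLength hn A B c ε} := by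
  classical
  set F : (Σ m' : Fin (n-1), ((Fin (m' : ℕ) → Fin n) × (Fin (m' : ℕ) → Bool))) → ℝ :=
    fun x => candidateLength hn A B x.2.1 (fun t => if x.2.2 t then 1 else -1) with hF
  apply Set.Finite.subset (Set.finite_range F)
  rintro q ⟨m, c, ε, hm, hinj, hge2, hε, rfl⟩
  have hmlt : m < n - 1 := by omega
  refine ⟨⟨⟨m, hmlt⟩, c, fun t => if ε t = 1 then true else false⟩, ?_⟩
  simp only [hF]
  have heq : (fun t => if (if ε t = 1 then true else false) = true then (1:ℝ) else -1) = ε := by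
    funext t
    rcases hε t with h | h
    · simp [h]
    · simp [h]
      intro hc
      linarith
  rw [heq]

theorem Qnonempty {n : ℕ} (hn : 3 ≤ n) (A B : Fin n → ℝ) :
    Set.Nonempty {q : ℝ |
        ∃ (m : ℕ) (c : Fin m → Fin n) (ε : Fin m → ℝ),
          m ≤ n - 2 ∧ Function.Injective c ∧ (∀ t, 2 ≤ ((c t : ℕ))) ∧
          (∀ t, ε t = 1 ∨ ε t = -1) ∧ q = candidateLength hn A B c ε} := by
  refine ⟨candidateLength hn A B (fun t : Fin 0 => t.elim0) (fun t => t.elim0),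
    0, _, _, by omega, fun a => a.elim0, fun t => t.elim0, fun t => t.elim0, rfl⟩

theorem main {n : ℕ} (hn : 3 ≤ n) (A B : Fin n → ℝ)
    (hA1 : A ⟨0, by linarith⟩ = 1) (hB2 : B ⟨1, by linarith⟩ = 1)
    (hA : ∀ i, A i ∈ Icc (-1:ℝ) 1) (hB : ∀ i, B i ∈ Icc (-1:ℝ) 1) :
    geoDist A B =
      ENNReal.ofReal (sInf {q : ℝ |
        ∃ (m : ℕ) (c : Fin m → Fin n) (ε : Fin m → ℝ),
          m ≤ n - 2 ∧ Function.Injective c ∧ (∀ t, 2 ≤ ((c t : ℕ))) ∧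
          (∀ t, ε t = 1 ∨ ε t = -1) ∧ q = candidateLength hn A B c ε}) := by
  refine le_antisymm ?_ ?_
  · have hmem := (Qnonempty hn A B).csInf_mem (Qfinite hn A B)
    obtain ⟨m, c, ε, hm, hinj, hge2, hε, hq⟩ := hmem
    rw [hq]
    exact upper hn A B hA1 hB2 hA hB c ε hinj hge2 hε
  · unfold geoDist
    refine le_iInf fun γ => le_iInf fun hγc => le_iInf fun hγ0 => le_iInf fun hγ1 =>
      le_iInf fun hγs => ?_
    exact lower hn A B hA1 hB2 hA hB (Qfinite hn A B).bddBelow γ hγc hγ0 hγ1 hγs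

end S18

end Main

theorem statement18 {n : ℕ} (hn : 3 ≤ n) (A B : Fin n → ℝ)
    (hA1 : A ⟨0, by omega⟩ = 1) (hB2 : B ⟨1, by omega⟩ = 1)
    (hA : ∀ i, A i ∈ Icc (-1:ℝ) 1) (hB : ∀ i, B i ∈ Icc (-1:ℝ) 1) :
    geoDist A B =
      ENNReal.ofReal (sInf {q : ℝ |
        ∃ (m : ℕ) (c : Fin m → Fin n) (ε : Fin m → ℝ),
          m ≤ n - 2 ∧ Function.Injective c ∧ (∀ t, 2 ≤ ((c t : ℕ))) ∧
          (∀ t, ε t = 1 ∨ ε t = -1) ∧ q = candidateLength hn A B c ε}) := by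
  exact S18.main hn A B hA1 hB2 hA hB
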